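/- Let A be an invertible d×d matrix over ℚ and H a subgroup of ℚ^d with A(H) = H whose ℚ-linear span equals ℚ^d, and let G = ℤ ⋉_A H. If ψ : G → Aff₊(ℝ) is a group homomorphism with non-Abelian image, then ψ(0,h) is a translation for every h ∈ H, and there exist a real number λ > 0 with λ ≠ 1, a vector v ∈ ℝ^d with Aᵀv = λv, and an element γ ∈ Aff₊(ℝ) such that γ ∘ ψ(n,h) ∘ γ⁻¹ = (x ↦ λⁿx + ⟨v,h⟩) for all (n,h) ∈ G, where ⟨v,h⟩ denotes the standard pairing Σᵢ vᵢhᵢ. -/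

import Mathlib

open Matrix Set

noncomputable section

/-- The group `Aff₊(ℝ)` of orientation-preserving affine transformations `x ↦ a·x + b`
(`a > 0`, composition as group law), as a subgroup of the permutation group of `ℝ`. -/
def AffPos : Subgroup (Equiv.Perm ℝ) where
  carrier := { e | ∃ a b : ℝ, 0 < a ∧ ∀ x, e x = a * x + b }
  one_mem' := ⟨1, 0, one_pos, fun x => by simp⟩
  mul_mem' := by
    rintro e₁ e₂ ⟨a₁, b₁, ha₁, h₁⟩ ⟨a₂, b₂, ha₂, h₂⟩
    refine ⟨a₁ * a₂, a₁ * b₂ + b₁, mul_pos ha₁ ha₂, fun x => ?_⟩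
    simp only [Equiv.Perm.mul_apply, h₁, h₂]; ring
  inv_mem' := by
    rintro e ⟨a, b, ha, h⟩
    refine ⟨a⁻¹, -b / a, inv_pos.mpr ha, fun x => ?_⟩
    have key : e (a⁻¹ * x + -b / a) = x := by rw [h]; field_simp; ring
    conv_lhs => rw [← key]
    rw [Equiv.Perm.coe_inv, Equiv.symm_apply_apply]

/-- The semidirect product `G = ℤ ⋉_A H`, where the generator `a` of the `ℤ`-factor acts
on the subgroup `H ≤ ℚ^d` by the restriction of the matrix `A`; this restriction (which is
well defined exactly when `A(H) = H`) is encoded as an additive automorphism `e` of `H`. -/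
abbrev GSd {d : ℕ} (H : AddSubgroup (Fin d → ℚ)) (e : H ≃+ H) : Type :=
  SemidirectProduct (Multiplicative H) (Multiplicative ℤ)
    (zpowersHom (MulAut (Multiplicative H)) (AddEquiv.toMultiplicative e))

/-- The element `(n, h)` of `G = ℤ ⋉_A H`; thus `a = elemSd 1 0` and `H` is identified
with the elements `elemSd 0 h`. -/
def elemSd {d : ℕ} {H : AddSubgroup (Fin d → ℚ)} {e : H ≃+ H} (n : ℤ) (b : H) : GSd H e :=
  ⟨Multiplicative.ofAdd b, Multiplicative.ofAdd n⟩

/-! A homomorphism into `Aff₊(ℝ)` sends the abelian normal subgroup `H` to translations: an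
image element with slope `≠ 1` has a unique fixed point, which commutation and normality force to
be fixed by all of `ψ(G)`, and affine maps with a common fixed point commute. So
`ψ(0,h) = (x ↦ x + τ h)` with `τ : H →+ ℝ` and `τ (A h) = λ τ h`, where `λ ≠ 1` is the slope of
`ψ a` (if `λ = 1`, the image consists of translations). As `ℝ` is divisible, `τ` extends to a
`ℚ`-linear form `⟨v, ·⟩` on `ℚ^d = span H`, and the eigen-relation passes to the span:
`Aᵀ v = λ v`. Conjugating by the translation moving the fixed point of `ψ a` to `0` gives the
normal form. -/

namespace AffPos

def slope (g : AffPos) : ℝ := (g : Equiv.Perm ℝ) 1 - (g : Equiv.Perm ℝ) 0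

def transl (g : AffPos) : ℝ := (g : Equiv.Perm ℝ) 0

theorem apply_eq (g : AffPos) (x : ℝ) : (g : Equiv.Perm ℝ) x = slope g * x + transl g := by
  obtain ⟨a, b, -, h⟩ := g.2
  simp only [slope, transl, h]
  ring

theorem slope_pos (g : AffPos) : 0 < slope g := by
  obtain ⟨a, b, ha, h⟩ := g.2
  simpa [slope, h] using ha

theorem mul_apply (g h : AffPos) (x : ℝ) :
    ((g * h : AffPos) : Equiv.Perm ℝ) x = (g : Equiv.Perm ℝ) ((h : Equiv.Perm ℝ) x) := rfl

theorem inv_apply_self (g : AffPos) (x : ℝ) :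
    ((g⁻¹ : AffPos) : Equiv.Perm ℝ) ((g : Equiv.Perm ℝ) x) = x := by
  simp

theorem apply_inv_self (g : AffPos) (x : ℝ) :
    (g : Equiv.Perm ℝ) (((g⁻¹ : AffPos) : Equiv.Perm ℝ) x) = x := by
  simp

theorem apply_add (g : AffPos) (x t : ℝ) :
    (g : Equiv.Perm ℝ) (x + t) = (g : Equiv.Perm ℝ) x + slope g * t := by
  rw [apply_eq, apply_eq]
  ring

theorem ext_of_slope_transl {g h : AffPos} (hs : slope g = slope h) (ht : transl g = transl h) :
    g = h :=
  Subtype.ext <| Equiv.ext fun x => by rw [apply_eq, apply_eq, hs, ht]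

theorem slope_mul (g h : AffPos) : slope (g * h) = slope g * slope h := by
  rw [slope.eq_1 (g * h), slope.eq_1 h, mul_apply, mul_apply, apply_eq g, apply_eq g]
  ring

theorem transl_mul (g h : AffPos) : transl (g * h) = slope g * transl h + transl g := by
  rw [transl.eq_1 (g * h), transl.eq_1 h, mul_apply, apply_eq g]

def slopeHom : AffPos →* ℝˣ where
  toFun g := Units.mk0 (slope g) (slope_pos g).ne'
  map_one' := by ext; simp [slope]
  map_mul' g h := by ext; simp [slope_mul]

theorem slope_zpow (g : AffPos) (n : ℤ) : slope (g ^ n) = slope g ^ n := by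
  simpa [slopeHom] using congrArg Units.val (map_zpow slopeHom g n)

theorem slope_inv (g : AffPos) : slope g⁻¹ = (slope g)⁻¹ := by
  simpa [slopeHom] using congrArg Units.val (map_inv slopeHom g)

theorem slope_conj (g f : AffPos) : slope (g * f * g⁻¹) = slope f := by
  rw [slope_mul, slope_mul, slope_inv, mul_right_comm, mul_inv_cancel₀ (slope_pos g).ne', one_mul]


theorem exists_apply_eq_self {g : AffPos} (hg : slope g ≠ 1) :
    ∃ p, (g : Equiv.Perm ℝ) p = p := by
  refine ⟨transl g / (1 - slope g), ?_⟩
  rw [apply_eq]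
  field_simp [sub_ne_zero.mpr hg.symm]
  ring

theorem eq_of_apply_eq_self {g : AffPos} (hg : slope g ≠ 1) {x y : ℝ}
    (hx : (g : Equiv.Perm ℝ) x = x) (hy : (g : Equiv.Perm ℝ) y = y) : x = y := by
  rw [apply_eq] at hx hy
  have : (slope g - 1) * (x - y) = 0 := by linear_combination hx - hy
  simpa [sub_eq_zero, hg] using this

theorem commute_of_apply_eq_self {g h : AffPos} {p : ℝ} (hg : (g : Equiv.Perm ℝ) p = p)
    (hh : (h : Equiv.Perm ℝ) p = p) : Commute g h := by
  refine ext_of_slope_transl (by rw [slope_mul, slope_mul, mul_comm]) ?_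
  rw [apply_eq] at hg hh
  rw [transl_mul, transl_mul]
  linear_combination (1 - slope h) * hg + (slope g - 1) * hh

theorem apply_eq_self_of_commute {f g : AffPos} (hf : slope f ≠ 1) {p : ℝ}
    (hp : (f : Equiv.Perm ℝ) p = p) (hc : Commute f g) : (g : Equiv.Perm ℝ) p = p :=
  eq_of_apply_eq_self hf (by rw [← mul_apply, hc.eq, mul_apply, hp]) hp

theorem commute_of_slope_eq_one {g h : AffPos} (hg : slope g = 1) (hh : slope h = 1) :
    Commute g h :=
  ext_of_slope_transl (by rw [slope_mul, slope_mul, mul_comm])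
    (by rw [transl_mul, transl_mul, hg, hh, one_mul, one_mul, add_comm])

theorem transl_conj_of_slope_eq_one (g : AffPos) {f : AffPos} (hf : slope f = 1) :
    transl (g * f * g⁻¹) = slope g * transl f := by
  rw [transl, mul_apply, mul_apply, apply_eq f, hf, one_mul, apply_add, apply_inv_self, zero_add]

def translation (t : ℝ) : AffPos := ⟨Equiv.addRight t, 1, t, one_pos, fun x => by simp⟩

theorem conj_translation_apply (g : AffPos) (p x : ℝ) :
    ((translation (-p) * g * (translation (-p))⁻¹ : AffPos) : Equiv.Perm ℝ) x
      = (g : Equiv.Perm ℝ) (x + p) - p := by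
  simp [translation, sub_eq_add_neg]

theorem conj_translation_mul_apply {t g : AffPos} (ht : slope t = 1) {p : ℝ}
    (hg : (g : Equiv.Perm ℝ) p = p) (x : ℝ) :
    ((translation (-p) * (t * g) * (translation (-p))⁻¹ : AffPos) : Equiv.Perm ℝ) x
      = slope g * x + transl t := by
  rw [conj_translation_apply, mul_apply, add_comm x, apply_add, hg, apply_eq t, ht]
  ring

theorem slope_eq_one_of_mem_normal {G : Type*} [Group G] (ψ : G →* AffPos)
    (hψ : ∃ g₁ g₂ : G, ψ g₁ * ψ g₂ ≠ ψ g₂ * ψ g₁) {N : Subgroup G} [hN : N.Normal]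
    (hcomm : ∀ x ∈ N, ∀ y ∈ N, Commute x y) {n : G} (hn : n ∈ N) : slope (ψ n) = 1 := by
  by_contra hne
  obtain ⟨p, hp⟩ := exists_apply_eq_self hne
  have hNp : ∀ m ∈ N, (ψ m : Equiv.Perm ℝ) p = p := fun m hm =>
    apply_eq_self_of_commute hne hp ((hcomm n hn m hm).map ψ)
  have hGp : ∀ g, (ψ g : Equiv.Perm ℝ) p = p := by
    intro g
    have hne' : slope (ψ (g * n * g⁻¹)) ≠ 1 := by rwa [map_mul, map_mul, map_inv, slope_conj]
    refine eq_of_apply_eq_self hne' ?_ (hNp _ (hN.conj_mem n hn g))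
    rw [map_mul, map_mul, map_inv, mul_apply, mul_apply, inv_apply_self, hp]
  obtain ⟨g₁, g₂, hg⟩ := hψ
  exact hg (commute_of_apply_eq_self (hGp g₁) (hGp g₂)).eq

end AffPos

section RatExtension

variable {V K : Type*} [AddCommGroup V] [Module ℚ V] [Field K] [CharZero K]

theorem exists_ratLinearMap_extends (H : AddSubgroup V) (τ : H →+ K) :
    ∃ L : V →ₗ[ℚ] K, ∀ h : H, L h = τ h := by
  obtain ⟨f, hf⟩ := (Module.Baer.of_divisible K).extension_property_addMonoidHom H.subtype
    Subtype.val_injective τ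
  exact ⟨f.toRatLinearMap, fun h => DFunLike.congr_fun hf h⟩

theorem exists_ratLinearMap_extends_of_map_eq_smul {H : AddSubgroup V}
    (hspan : Submodule.span ℚ (H : Set V) = ⊤) {f : V →ₗ[ℚ] V} {e : H →+ H}
    (he : ∀ h : H, (e h : V) = f h) {τ : H →+ K} {lam : K} (hτ : ∀ h, τ (e h) = lam * τ h) :
    ∃ L : V →ₗ[ℚ] K, (∀ h : H, L h = τ h) ∧ ∀ x, L (f x) = lam * L x := by
  obtain ⟨L, hL⟩ := exists_ratLinearMap_extends H τ
  have hLf : L ∘ₗ f = lam • L := LinearMap.ext_on hspan fun x hx => by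
    have := hτ ⟨x, hx⟩
    rw [← hL, ← hL, he] at this
    simpa using this
  exact ⟨L, hL, LinearMap.congr_fun hLf⟩

end RatExtension

section RatLinearMap

variable {ι : Type*} [Fintype ι] [DecidableEq ι]

theorem ratLinearMap_apply_eq_sum (L : (ι → ℚ) →ₗ[ℚ] ℝ) (x : ι → ℚ) :
    L x = ∑ i, L (Pi.single i 1) * (x i : ℝ) := by
  conv_lhs => rw [← Finset.univ_sum_single x, map_sum]
  refine Finset.sum_congr rfl fun i _ => ?_
  rw [mul_comm, ← smul_eq_mul, Rat.cast_smul_eq_qsmul, ← map_smul, ← Pi.single_smul', smul_eq_mul,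
    mul_one]

theorem transpose_map_mulVec_eq_smul (A : Matrix ι ι ℚ) (L : (ι → ℚ) →ₗ[ℚ] ℝ) {lam : ℝ}
    (hL : ∀ x, L (A *ᵥ x) = lam * L x) :
    (A.map (fun q : ℚ => (q : ℝ)))ᵀ *ᵥ (fun i => L (Pi.single i 1))
      = lam • fun i => L (Pi.single i 1) := by
  ext i
  rw [Pi.smul_apply, smul_eq_mul, ← hL, ratLinearMap_apply_eq_sum L, Matrix.mulVec, dotProduct]
  simp [Matrix.mulVec_single, mul_comm]

end RatLinearMap

section SemidirectProduct

variable {d : ℕ} {H : AddSubgroup (Fin d → ℚ)} {e : H ≃+ H}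

theorem elemSd_zero_eq_inl (h : H) :
    (elemSd 0 h : GSd H e) = SemidirectProduct.inl (Multiplicative.ofAdd h) := rfl

theorem elemSd_zero_add (h h' : H) :
    (elemSd 0 (h + h') : GSd H e) = elemSd 0 h * elemSd 0 h' := by
  simp only [elemSd_zero_eq_inl, ← map_mul]
  rfl

theorem elemSd_eq_mul_zpow (n : ℤ) (h : H) :
    (elemSd n h : GSd H e) = elemSd 0 h * elemSd 1 0 ^ n := by
  rw [elemSd_zero_eq_inl, show (elemSd 1 0 : GSd H e) = SemidirectProduct.inr
    (Multiplicative.ofAdd 1) from rfl, ← map_zpow, ← ofAdd_zsmul, zsmul_one, Int.cast_id,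
    ← SemidirectProduct.mk_eq_inl_mul_inr]
  rfl

theorem elemSd_conj (h : H) :
    (elemSd 1 0 : GSd H e) * elemSd 0 h * (elemSd 1 0)⁻¹ = elemSd 0 (e h) := by
  rw [elemSd_zero_eq_inl, elemSd_zero_eq_inl, show (elemSd 1 0 : GSd H e) =
    SemidirectProduct.inr (Multiplicative.ofAdd 1) from rfl, ← map_inv,
    ← SemidirectProduct.inl_aut]
  rfl

theorem exists_eq_elemSd (g : GSd H e) : ∃ n h, g = elemSd n h :=
  ⟨Multiplicative.toAdd g.right, Multiplicative.toAdd g.left, rfl⟩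

theorem slope_elemSd_zero (ψ : GSd H e →* AffPos) (hψ : ∃ g₁ g₂, ψ g₁ * ψ g₂ ≠ ψ g₂ * ψ g₁)
    (h : H) : AffPos.slope (ψ (elemSd 0 h)) = 1 := by
  have : (SemidirectProduct.inl : _ →* GSd H e).range.Normal := by
    rw [SemidirectProduct.range_inl_eq_ker_rightHom]
    infer_instance
  refine AffPos.slope_eq_one_of_mem_normal ψ hψ (N := (SemidirectProduct.inl).range) ?_
    ⟨Multiplicative.ofAdd h, rfl⟩
  rintro _ ⟨x, rfl⟩ _ ⟨y, rfl⟩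
  exact (Commute.all x y).map _

theorem slope_elemSd (ψ : GSd H e →* AffPos) (hψ : ∃ g₁ g₂, ψ g₁ * ψ g₂ ≠ ψ g₂ * ψ g₁)
    (n : ℤ) (h : H) : AffPos.slope (ψ (elemSd n h)) = AffPos.slope (ψ (elemSd 1 0)) ^ n := by
  rw [elemSd_eq_mul_zpow, map_mul, AffPos.slope_mul, slope_elemSd_zero ψ hψ, map_zpow,
    AffPos.slope_zpow, one_mul]

theorem slope_elemSd_one_zero_ne_one (ψ : GSd H e →* AffPos)
    (hψ : ∃ g₁ g₂, ψ g₁ * ψ g₂ ≠ ψ g₂ * ψ g₁) : AffPos.slope (ψ (elemSd 1 0)) ≠ 1 := by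
  intro h1
  have hslope (g : GSd H e) : AffPos.slope (ψ g) = 1 := by
    obtain ⟨n, h, rfl⟩ := exists_eq_elemSd g
    rw [slope_elemSd ψ hψ, h1, _root_.one_zpow]
  obtain ⟨g₁, g₂, hg⟩ := hψ
  exact hg (AffPos.commute_of_slope_eq_one (hslope g₁) (hslope g₂)).eq

def translHom (ψ : GSd H e →* AffPos) (hψ : ∃ g₁ g₂, ψ g₁ * ψ g₂ ≠ ψ g₂ * ψ g₁) : H →+ ℝ :=
  AddMonoidHom.mk' (fun h => AffPos.transl (ψ (elemSd 0 h))) fun h h' => by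
    rw [elemSd_zero_add, map_mul, AffPos.transl_mul, slope_elemSd_zero ψ hψ, one_mul, add_comm]

theorem translHom_apply (ψ : GSd H e →* AffPos) (hψ : ∃ g₁ g₂, ψ g₁ * ψ g₂ ≠ ψ g₂ * ψ g₁)
    (h : H) : translHom ψ hψ h = AffPos.transl (ψ (elemSd 0 h)) := rfl

theorem translHom_apply_aut (ψ : GSd H e →* AffPos) (hψ : ∃ g₁ g₂, ψ g₁ * ψ g₂ ≠ ψ g₂ * ψ g₁)
    (h : H) : translHom ψ hψ (e h) = AffPos.slope (ψ (elemSd 1 0)) * translHom ψ hψ h := by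
  rw [translHom_apply, translHom_apply, ← elemSd_conj, map_mul, map_mul, map_inv,
    AffPos.transl_conj_of_slope_eq_one _ (slope_elemSd_zero ψ hψ h)]

end SemidirectProduct

theorem stmt_2_general {d : ℕ} (A : Matrix (Fin d) (Fin d) ℚ)
    (H : AddSubgroup (Fin d → ℚ)) (e : H ≃+ H)
    (he : ∀ h : H, ((e h : Fin d → ℚ)) = A.mulVec (h : Fin d → ℚ))
    (hspan : Submodule.span ℚ (H : Set (Fin d → ℚ)) = ⊤)
    (ψ : GSd H e →* AffPos) (hnab : ∃ g₁ g₂ : GSd H e, ψ g₁ * ψ g₂ ≠ ψ g₂ * ψ g₁) :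
    (∀ h : H, ∃ t : ℝ, ∀ x : ℝ, ((ψ (elemSd 0 h) : Equiv.Perm ℝ)) x = x + t) ∧
    ∃ lam : ℝ, 0 < lam ∧ lam ≠ 1 ∧ ∃ v : Fin d → ℝ,
      (A.map (fun q : ℚ => (q : ℝ))).transpose.mulVec v = lam • v ∧
      ∃ γ : AffPos, ∀ (n : ℤ) (h : H) (x : ℝ),
        ((γ * ψ (elemSd n h) * γ⁻¹ : AffPos) : Equiv.Perm ℝ) x
          = lam ^ n * x + ∑ i, v i * ((h : Fin d → ℚ) i : ℝ) := by
  have htransl := slope_elemSd_zero ψ hnab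
  have hlam := slope_elemSd_one_zero_ne_one ψ hnab
  obtain ⟨L, hL, hLA⟩ := exists_ratLinearMap_extends_of_map_eq_smul hspan (f := A.mulVecLin)
    (e := e.toAddMonoidHom) he (translHom_apply_aut ψ hnab)
  obtain ⟨p, hp⟩ := AffPos.exists_apply_eq_self hlam
  refine ⟨fun h => ⟨translHom ψ hnab h, fun x => by rw [AffPos.apply_eq, htransl, one_mul]; rfl⟩,
    _, AffPos.slope_pos _, hlam, _, transpose_map_mulVec_eq_smul A L hLA,
    AffPos.translation (-p), fun n h x => ?_⟩
  have hpn : ((ψ (elemSd 1 0) ^ n : AffPos) : Equiv.Perm ℝ) p = p := by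
    rw [SubgroupClass.coe_zpow, Equiv.Perm.zpow_apply_eq_self_of_apply_eq_self hp]
  rw [elemSd_eq_mul_zpow, map_mul, map_zpow, AffPos.conj_translation_mul_apply (htransl h) hpn,
    AffPos.slope_zpow, ← ratLinearMap_apply_eq_sum, hL, translHom_apply]

/-- Every homomorphism `ψ : ℤ ⋉_A H → Aff₊(ℝ)` with non-Abelian image
sends `H` to translations and is conjugate in `Aff₊(ℝ)` to `(n,h) ↦ (x ↦ λⁿ x + ⟨v,h⟩)`
for some `λ > 0`, `λ ≠ 1` and some vector `v` with `Aᵀ v = λ v`. -/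
theorem stmt_2 {d : ℕ} (hd : 0 < d) (A : Matrix (Fin d) (Fin d) ℚ) (hA : IsUnit A.det)
    (H : AddSubgroup (Fin d → ℚ)) (e : H ≃+ H)
    (he : ∀ h : H, ((e h : Fin d → ℚ)) = A.mulVec (h : Fin d → ℚ))
    (hspan : Submodule.span ℚ (H : Set (Fin d → ℚ)) = ⊤)
    (ψ : GSd H e →* AffPos) (hnab : ∃ g₁ g₂ : GSd H e, ψ g₁ * ψ g₂ ≠ ψ g₂ * ψ g₁) :
    (∀ h : H, ∃ t : ℝ, ∀ x : ℝ, ((ψ (elemSd 0 h) : Equiv.Perm ℝ)) x = x + t) ∧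
    ∃ lam : ℝ, 0 < lam ∧ lam ≠ 1 ∧ ∃ v : Fin d → ℝ,
      (A.map (fun q : ℚ => (q : ℝ))).transpose.mulVec v = lam • v ∧
      ∃ γ : AffPos, ∀ (n : ℤ) (h : H) (x : ℝ),
        ((γ * ψ (elemSd n h) * γ⁻¹ : AffPos) : Equiv.Perm ℝ) x
          = lam ^ n * x + ∑ i, v i * ((h : Fin d → ℚ) i : ℝ) :=
  stmt_2_general A H e he hspan ψ hnab
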